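/- arXiv:1407.0134 — 3 statements merged into one kernel-verified Lean document; each statement's English description precedes it below -/
import Mathlib

section
/- Let T₁,T₂ > 0 and H₁,H₂ ∈ (0,1). Equip T = [0,T₁]×[0,T₂] with the metric ρ₂(t,s) = |t₁−s₁|^{H₁} + |t₂−s₂|^{H₂}. Set K₁ = (H₂/(H₁+H₂))^{1/H₁} and K₂ = (H₁/(H₁+H₂))^{1/H₂}. Then for every u > 0 the minimal number N(u) of closed ρ₂-balls of radius u needed to cover T satisfies N(u) ≤ 2·(T₁/(4K₁u^{1/H₁}) + 3/2)·(T₂/(4K₂u^{1/H₂}) + 3/2). -/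
/-!
By concavity, `(2s) ^ H ≤ 1 + H (2s - 1)`, so with `a_i = 2 K_i u ^ (1 / H_i)` the ℓ¹-type ball
`|x₁| / a₁ + |x₂| / a₂ ≤ 1` lies in the `ρ₂`-ball of radius `u`: the weights `K_i ^ H_i`, namely
`H₂ / (H₁ + H₂)` and `H₁ / (H₁ + H₂)`, are exactly those that make the two linear bounds add up
to `u - 2 (H₁ H₂ / (H₁ + H₂)) u (1 - |x₁| / a₁ - |x₂| / a₂)`.
In the coordinates `x_i / a_i`, the unit ℓ¹-balls centred at the checkerboard lattice
`{(i, j) : i + j even}` cover the plane (the change of variables `(p, q) ↦ (p + q, p - q)` turns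
them into the squares of side `2` centred at `2ℤ × 2ℤ`), and half of the lattice points of a
rectangle of sides `T_i / a_i + 1` suffice.
-/

open Finset

lemma abs_add_abs_le_of_abs_add_le_of_abs_sub_le {a b c : ℝ} (h₁ : |a + b| ≤ c)
    (h₂ : |a - b| ≤ c) : |a| + |b| ≤ c := by
  rw [abs_le] at h₁ h₂
  rcases abs_cases a with ⟨ha, _⟩ | ⟨ha, _⟩ <;> rcases abs_cases b with ⟨hb, _⟩ | ⟨hb, _⟩ <;>
    linarith

lemma exists_even_add_abs_sub_add_abs_sub_le_one (p q : ℝ) :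
    ∃ i j : ℤ, Even (i + j) ∧ |p - i| + |q - j| ≤ 1 ∧
      p - 1 < i ∧ (i : ℝ) ≤ p + 1 ∧ q - 1 < j ∧ (j : ℝ) ≤ q + 1 := by
  set k := ⌊(p + q + 1) / 2⌋
  set l := ⌊(p - q + 1) / 2⌋
  have hk₁ : (k : ℝ) ≤ (p + q + 1) / 2 := Int.floor_le _
  have hk₂ : (p + q + 1) / 2 < k + 1 := Int.lt_floor_add_one _
  have hl₁ : (l : ℝ) ≤ (p - q + 1) / 2 := Int.floor_le _
  have hl₂ : (p - q + 1) / 2 < l + 1 := Int.lt_floor_add_one _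
  refine ⟨k + l, k - l, ⟨k, by ring⟩, ?_, ?_⟩
  · apply abs_add_abs_le_of_abs_add_le_of_abs_sub_le <;> rw [abs_le] <;> push_cast <;>
      constructor <;> linarith
  · push_cast
    refine ⟨?_, ?_, ?_, ?_⟩ <;> linarith

lemma exists_checkerboard_cover_Icc (x y : ℝ) (hx : 0 ≤ x) (hy : 0 ≤ y) :
    ∃ S : Finset (ℕ × ℕ),
      (∀ p ∈ Set.Icc 0 x, ∀ q ∈ Set.Icc 0 y, ∃ ij ∈ S, |p - ij.1| + |q - ij.2| ≤ 1) ∧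
      (#S : ℝ) ≤ (x + 3) * (y + 3) / 2 := by
  set A := ⌊x⌋₊ + 1
  set B := ⌊y⌋₊ + 1
  -- `(k, j) ↦ (2k + j % 2, j)` enumerates the points `(i, j)` with `i + j` even, `i ≤ A`, `j ≤ B`.
  refine ⟨(range (A / 2 + 1) ×ˢ range (B + 1)).image fun kj => (2 * kj.1 + kj.2 % 2, kj.2),
    ?_, ?_⟩
  · rintro p ⟨hp₀, hpx⟩ q ⟨hq₀, hqy⟩
    obtain ⟨i, j, heven, hdist, hi₁, hi₂, hj₁, hj₂⟩ :=
      exists_even_add_abs_sub_add_abs_sub_le_one p q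
    lift i to ℕ using by exact_mod_cast (by linarith : (-1 : ℝ) < i)
    lift j to ℕ using by exact_mod_cast (by linarith : (-1 : ℝ) < j)
    have hiA : i < ⌊x⌋₊ + 2 := by
      have := Nat.lt_floor_add_one x
      exact_mod_cast (by push_cast at hi₂ ⊢; linarith : (i : ℝ) < ⌊x⌋₊ + 2)
    have hjB : j < ⌊y⌋₊ + 2 := by
      have := Nat.lt_floor_add_one y
      exact_mod_cast (by push_cast at hj₂ ⊢; linarith : (j : ℝ) < ⌊y⌋₊ + 2)
    have hparity : (i + j) % 2 = 0 := Nat.even_iff.1 (by exact_mod_cast heven)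
    refine ⟨(i, j), mem_image.2 ⟨(i / 2, j), ?_, ?_⟩, by exact_mod_cast hdist⟩
    · simp only [mem_product, mem_range]
      omega
    · ext <;> omega
  · have hA : (A : ℝ) ≤ x + 1 := by
      simp only [A]; push_cast; linarith [Nat.floor_le hx]
    have hB : (B : ℝ) ≤ y + 1 := by
      simp only [B]; push_cast; linarith [Nat.floor_le hy]
    have hA2 : ((A / 2 : ℕ) : ℝ) ≤ A / 2 := Nat.cast_div_le
    calc (#(image _ _) : ℝ) ≤ #(range (A / 2 + 1) ×ˢ range (B + 1)) := by
          exact_mod_cast card_image_le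
      _ = ((A / 2 : ℕ) + 1) * (B + 1) := by simp
      _ ≤ (x + 3) * (y + 3) / 2 := by nlinarith

lemma exists_finset_l1_cover_rectangle (T₁ T₂ a₁ a₂ : ℝ) (hT₁ : 0 ≤ T₁) (hT₂ : 0 ≤ T₂)
    (ha₁ : 0 < a₁) (ha₂ : 0 < a₂) :
    ∃ F : Finset (ℝ × ℝ),
      Set.Icc 0 T₁ ×ˢ Set.Icc 0 T₂ ⊆ ⋃ c ∈ F, {x | |x.1 - c.1| / a₁ + |x.2 - c.2| / a₂ ≤ 1} ∧
      (#F : ℝ) ≤ (T₁ / a₁ + 3) * (T₂ / a₂ + 3) / 2 := by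
  obtain ⟨S, hcover, hcard⟩ :=
    exists_checkerboard_cover_Icc (T₁ / a₁) (T₂ / a₂) (by positivity) (by positivity)
  refine ⟨S.image fun ij => (ij.1 * a₁, ij.2 * a₂), ?_,
    hcard.trans' (by exact_mod_cast card_image_le)⟩
  rintro ⟨t₁, t₂⟩ ⟨⟨ht₁₀, ht₁⟩, ⟨ht₂₀, ht₂⟩⟩
  obtain ⟨ij, hij, hdist⟩ :=
    hcover (t₁ / a₁) ⟨by positivity, by gcongr⟩ (t₂ / a₂) ⟨by positivity, by gcongr⟩
  have hscale : ∀ {t a : ℝ} (n : ℕ), 0 < a → |t - n * a| / a = |t / a - n| := fun n ha => by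
    rw [← abs_of_pos ha, ← abs_div, abs_of_pos ha, sub_div, mul_div_cancel_right₀ _ ha.ne']
  exact Set.mem_biUnion (mem_image_of_mem _ hij) (by simpa only [hscale _ ha₁, hscale _ ha₂])

lemma two_mul_rpow_one_div_mul_rpow_le {H c s : ℝ} (hH₀ : 0 < H) (hH₁ : H ≤ 1) (hc : 0 ≤ c)
    (hs : 0 ≤ s) : (2 * c ^ (1 / H) * s) ^ H ≤ c * (2 * H * s + 1 - H) := by
  have hfactor : (2 * c ^ (1 / H) * s) ^ H = c * (2 * s) ^ H := by
    rw [mul_right_comm, Real.mul_rpow (by positivity) (by positivity), ← Real.rpow_mul hc,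
      one_div_mul_cancel hH₀.ne', Real.rpow_one, mul_comm]
  have hconcave : (2 * s) ^ H ≤ 1 + H * (2 * s - 1) := by
    simpa using rpow_one_add_le_one_add_mul_self (by linarith : -1 ≤ 2 * s - 1) hH₀.le hH₁
  rw [hfactor]
  nlinarith [mul_le_mul_of_nonneg_left hconcave hc]

lemma rpow_add_rpow_le_of_div_add_div_le_one {H₁ H₂ u x₁ x₂ : ℝ} (hH₁ : H₁ ∈ Set.Ioc 0 1)
    (hH₂ : H₂ ∈ Set.Ioc 0 1) (hu : 0 < u)
    (hx : |x₁| / (2 * (H₂ / (H₁ + H₂)) ^ (1 / H₁) * u ^ (1 / H₁))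
      + |x₂| / (2 * (H₁ / (H₁ + H₂)) ^ (1 / H₂) * u ^ (1 / H₂)) ≤ 1) :
    |x₁| ^ H₁ + |x₂| ^ H₂ ≤ u := by
  obtain ⟨hH₁₀, hH₁₁⟩ := hH₁
  obtain ⟨hH₂₀, hH₂₁⟩ := hH₂
  set s := |x₁| / (2 * (H₂ / (H₁ + H₂)) ^ (1 / H₁) * u ^ (1 / H₁))
  set t := |x₂| / (2 * (H₁ / (H₁ + H₂)) ^ (1 / H₂) * u ^ (1 / H₂))
  have hx₁ : |x₁| = 2 * (H₂ / (H₁ + H₂) * u) ^ (1 / H₁) * s := by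
    rw [Real.mul_rpow (by positivity) hu.le, ← mul_assoc, mul_div_cancel₀ _ (by positivity)]
  have hx₂ : |x₂| = 2 * (H₁ / (H₁ + H₂) * u) ^ (1 / H₂) * t := by
    rw [Real.mul_rpow (by positivity) hu.le, ← mul_assoc, mul_div_cancel₀ _ (by positivity)]
  have hsum : H₂ / (H₁ + H₂) * u * (2 * H₁ * s + 1 - H₁)
      + H₁ / (H₁ + H₂) * u * (2 * H₂ * t + 1 - H₂)
      = u - 2 * (H₁ * H₂ / (H₁ + H₂)) * u * (1 - (s + t)) := by
    field_simp
    ring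
  calc |x₁| ^ H₁ + |x₂| ^ H₂
      ≤ H₂ / (H₁ + H₂) * u * (2 * H₁ * s + 1 - H₁)
        + H₁ / (H₁ + H₂) * u * (2 * H₂ * t + 1 - H₂) := by
        rw [hx₁, hx₂]
        gcongr <;> exact two_mul_rpow_one_div_mul_rpow_le (by assumption) (by assumption)
          (by positivity) (by positivity)
    _ ≤ u := by
        rw [hsum]
        have : 0 ≤ 2 * (H₁ * H₂ / (H₁ + H₂)) * u * (1 - (s + t)) := by
          have := sub_nonneg.2 hx
          positivity
        linarith

theorem stmt5 (T₁ T₂ H₁ H₂ : ℝ) (hT₁ : 0 < T₁) (hT₂ : 0 < T₂)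
    (hH₁ : H₁ ∈ Set.Ioo (0:ℝ) 1) (hH₂ : H₂ ∈ Set.Ioo (0:ℝ) 1)
    (u : ℝ) (hu : 0 < u) :
    ∃ F : Finset (ℝ × ℝ),
      (Set.Icc 0 T₁ ×ˢ Set.Icc 0 T₂ ⊆
        ⋃ c ∈ F, {x : ℝ × ℝ | |x.1 - c.1| ^ H₁ + |x.2 - c.2| ^ H₂ ≤ u}) ∧
      (F.card : ℝ) ≤
        2 * (T₁ / (4 * (H₂ / (H₁ + H₂)) ^ (1 / H₁) * u ^ (1 / H₁)) + 3 / 2)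
          * (T₂ / (4 * (H₁ / (H₁ + H₂)) ^ (1 / H₂) * u ^ (1 / H₂)) + 3 / 2) := by
  obtain ⟨hH₁₀, hH₁₁⟩ := hH₁
  obtain ⟨hH₂₀, hH₂₁⟩ := hH₂
  obtain ⟨F, hcover, hcard⟩ := exists_finset_l1_cover_rectangle T₁ T₂
    (2 * (H₂ / (H₁ + H₂)) ^ (1 / H₁) * u ^ (1 / H₁))
    (2 * (H₁ / (H₁ + H₂)) ^ (1 / H₂) * u ^ (1 / H₂)) hT₁.le hT₂.le (by positivity) (by positivity)
  refine ⟨F, hcover.trans (Set.iUnion₂_mono fun c _ x hx =>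
    rpow_add_rpow_le_of_div_add_div_le_one ⟨hH₁₀, hH₁₁.le⟩ ⟨hH₂₀, hH₂₁.le⟩ hu hx),
    hcard.trans_eq ?_⟩
  field_simp
  ring
end

section
/- Let H₁,H₂ ∈ (0,1) and set K₁ = (H₂/(H₁+H₂))^{1/H₁}, K₂ = (H₁/(H₁+H₂))^{1/H₂}, a₁ = 2K₁ε^{1/H₁}, a₂ = 2K₂ε^{1/H₂} for ε > 0. Then the set V = {x ∈ ℝ² : |x₁|/a₁ + |x₂|/a₂ ≤ 1} is contained in the ρ₂-ball {x : |x₁|^{H₁} + |x₂|^{H₂} ≤ ε}. -/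
/-! Put `u = |x₁| / a₁` and `v = |x₂| / a₂`. Since `a₁ = 2 (K₁ ^ H₁ ε) ^ (1 / H₁)`, we have
`|x₁| ^ H₁ = (2 u) ^ H₁ K₁ ^ H₁ ε`, and Bernoulli's inequality `(2 u) ^ H ≤ 1 + H (2 u - 1)`
(valid as `H ≤ 1`) bounds it linearly in `u`; likewise for `x₂`. The weights
`K₁ ^ H₁ = H₂ / (H₁ + H₂)` and `K₂ ^ H₂ = H₁ / (H₁ + H₂)` sum to `1` and give both linear bounds
the same slope `2 H₁ H₂ ε / (H₁ + H₂)`, so the sum of the bounds is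
`ε - 2 H₁ H₂ ε (1 - (u + v)) / (H₁ + H₂) ≤ ε`. -/

theorem Real.rpow_le_one_add_mul_of_div {H y b : ℝ} (hH₀ : 0 < H) (hH₁ : H ≤ 1) (hy : 0 ≤ y)
    (hb : 0 < b) : y ^ H ≤ (1 + H * (2 * (y / (2 * b ^ (1 / H))) - 1)) * b := by
  set u := y / (2 * b ^ (1 / H))
  have hu : 0 ≤ u := by positivity
  have hy_eq : y ^ H = (2 * u) ^ H * b := by
    rw [show y = 2 * u * b ^ (1 / H) by simp only [u]; field_simp,
      Real.mul_rpow (by positivity) (by positivity), ← Real.rpow_mul hb.le,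
      one_div_mul_cancel hH₀.ne', Real.rpow_one]
  have bernoulli : (2 * u) ^ H ≤ 1 + H * (2 * u - 1) := by
    simpa using rpow_one_add_le_one_add_mul_self (s := 2 * u - 1) (by linarith) hH₀.le hH₁
  rw [hy_eq]
  exact mul_le_mul_of_nonneg_right bernoulli hb.le

theorem stmt6 (H₁ H₂ ε : ℝ)
    (hH₁ : H₁ ∈ Set.Ioo (0:ℝ) 1) (hH₂ : H₂ ∈ Set.Ioo (0:ℝ) 1) (hε : 0 < ε) :
    {x : ℝ × ℝ |
        |x.1| / (2 * (H₂ / (H₁ + H₂)) ^ (1 / H₁) * ε ^ (1 / H₁))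
          + |x.2| / (2 * (H₁ / (H₁ + H₂)) ^ (1 / H₂) * ε ^ (1 / H₂)) ≤ 1}
      ⊆ {x : ℝ × ℝ | |x.1| ^ H₁ + |x.2| ^ H₂ ≤ ε} := by
  obtain ⟨hH₁₀, hH₁₁⟩ := hH₁
  obtain ⟨hH₂₀, hH₂₁⟩ := hH₂
  have hs : 0 < H₁ + H₂ := by linarith
  intro x hx
  simp only [Set.mem_ofPred_eq] at hx ⊢
  rw [mul_assoc, mul_assoc, ← Real.mul_rpow (by positivity) hε.le,
    ← Real.mul_rpow (by positivity) hε.le] at hx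
  have h₁ := Real.rpow_le_one_add_mul_of_div hH₁₀ hH₁₁.le (abs_nonneg x.1)
    (by positivity : 0 < H₂ / (H₁ + H₂) * ε)
  have h₂ := Real.rpow_le_one_add_mul_of_div hH₂₀ hH₂₁.le (abs_nonneg x.2)
    (by positivity : 0 < H₁ / (H₁ + H₂) * ε)
  set u := |x.1| / (2 * (H₂ / (H₁ + H₂) * ε) ^ (1 / H₁))
  set v := |x.2| / (2 * (H₁ / (H₁ + H₂) * ε) ^ (1 / H₂))
  have slack : (1 + H₁ * (2 * u - 1)) * (H₂ / (H₁ + H₂) * ε)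
      + (1 + H₂ * (2 * v - 1)) * (H₁ / (H₁ + H₂) * ε)
      = ε - 2 * (H₁ * H₂ / (H₁ + H₂) * ε) * (1 - (u + v)) := by
    field_simp
    ring
  have hc : 0 ≤ H₁ * H₂ / (H₁ + H₂) * ε := by positivity
  linarith [mul_nonneg hc (sub_nonneg.2 hx)]
end

section
/- Let H₁,H₂ ∈ (0,1), H = min(H₁,H₂). Suppose that for every ε > 0 the bound P(sup_{t∈[0,1]²}|X(t)| > ε) ≤ 8 exp{−ε²(1−p)/(2(1 + 4p/(2^{2H}(1−p))))}·(e/p)^{2/H} holds for all p ∈ (0,1). Then for every ε > 2, P(sup_{t∈[0,1]²}|X(t)| > ε) ≤ 8 e^{2/H + 1/2} ε^{4/H} exp{−3ε²/(2(4^{1−H}+3))}. -/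
/-! Take `p = ε⁻²`. The polynomial factor becomes `(e ε²) ^ (2/H)`, and with `a = 4 ^ (1 - H)` the
exponent becomes `(ε² - 1) / (2 (1 + a / (ε² - 1)))`; since `ε² - 1 ≥ 3` this is at least
`3 (ε² - 1) / (2 (3 + a))`, which differs from the target exponent by at most `1/2`. -/

open Real

lemma four_rpow_one_sub (H : ℝ) : (4 : ℝ) ^ (1 - H) = 4 / 2 ^ (2 * H) := by
  rw [show (4 : ℝ) = 2 ^ (2 : ℝ) by norm_num, ← rpow_mul zero_le_two, mul_one_sub,
    rpow_sub zero_lt_two]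

lemma exp_one_mul_sq_rpow {x : ℝ} (hx : 0 ≤ x) (r : ℝ) :
    (exp 1 * x ^ 2) ^ r = exp r * x ^ (2 * r) := by
  rw [mul_rpow (exp_pos 1).le (by positivity), exp_one_rpow, ← rpow_natCast, ← rpow_mul hx,
    Nat.cast_ofNat]

lemma mul_div_add_le_div_one_add_div {a b y : ℝ} (ha : 0 ≤ a) (hb : 0 < b) (hby : b ≤ y) :
    y * b / (b + a) ≤ y / (1 + a / y) := by
  have hy : 0 < y := hb.trans_le hby
  rw [div_le_div_iff₀ (by positivity) (by positivity)]
  field_simp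
  nlinarith [mul_le_mul_of_nonneg_left hby ha]

-- The exponent of the assumed bound at `p = 1 / x`, with `c = 2 ^ (2H)`, so that `4 / c = 4 ^ (1 - H)`.
lemma exponent_le {c x : ℝ} (hc : 0 < c) (hx : 4 ≤ x) :
    -(x * (1 - x⁻¹)) / (2 * (1 + 4 * x⁻¹ / (c * (1 - x⁻¹))))
      ≤ 1 / 2 + -(3 * x) / (2 * (4 / c + 3)) := by
  have hsimp : x * (1 - x⁻¹) / (1 + 4 * x⁻¹ / (c * (1 - x⁻¹)))
      = (x - 1) / (1 + 4 / c / (x - 1)) := by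
    field_simp
  have key := mul_div_add_le_div_one_add_div (y := x - 1) (by positivity : 0 ≤ 4 / c)
    three_pos (by linarith)
  calc -(x * (1 - x⁻¹)) / (2 * (1 + 4 * x⁻¹ / (c * (1 - x⁻¹))))
      = -((x - 1) / (1 + 4 / c / (x - 1))) / 2 := by
        rw [← hsimp, mul_comm 2, ← div_div, neg_div]
    _ ≤ -((x - 1) * 3 / (3 + 4 / c)) / 2 := by linarith
    _ ≤ 1 / 2 + -(3 * x) / (2 * (4 / c + 3)) := by
        rw [div_add_div _ _ (by norm_num) (by positivity), div_le_div_iff₀ (by norm_num) (by positivity)]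
        field_simp
        nlinarith

theorem stmt12_general (H₁ H₂ : ℝ)
    (I : ℝ → ℝ)
    (hI : ∀ ε : ℝ, 0 < ε → ∀ p ∈ Set.Ioo (0:ℝ) 1,
      I ε ≤ 8 * Real.exp (-(ε ^ 2 * (1 - p))
          / (2 * (1 + 4 * p / ((2:ℝ) ^ (2 * min H₁ H₂) * (1 - p)))))
        * (Real.exp 1 / p) ^ (2 / min H₁ H₂)) :
    ∀ ε : ℝ, 2 < ε →
      I ε ≤ 8 * Real.exp (2 / min H₁ H₂ + 1 / 2) * ε ^ (4 / min H₁ H₂)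
        * Real.exp (-(3 * ε ^ 2) / (2 * ((4:ℝ) ^ (1 - min H₁ H₂) + 3))) := by
  intro ε hε
  set H := min H₁ H₂
  have hx : 4 < ε ^ 2 := by nlinarith
  have hp : (ε ^ 2)⁻¹ ∈ Set.Ioo (0 : ℝ) 1 := ⟨by positivity, inv_lt_one_of_one_lt₀ (by linarith)⟩
  have hexp := exp_le_exp.2 (exponent_le (rpow_pos_of_pos two_pos (2 * H)) hx.le)
  have hpow := exp_one_mul_sq_rpow (by linarith : 0 ≤ ε) (2 / H)
  have h := hI ε (by linarith) _ hp
  rw [div_inv_eq_mul, hpow] at h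
  calc I ε ≤ 8 * exp (-(ε ^ 2 * (1 - (ε ^ 2)⁻¹))
          / (2 * (1 + 4 * (ε ^ 2)⁻¹ / (2 ^ (2 * H) * (1 - (ε ^ 2)⁻¹)))))
        * (exp (2 / H) * ε ^ (2 * (2 / H))) := h
    _ ≤ 8 * exp (1 / 2 + -(3 * ε ^ 2) / (2 * (4 / 2 ^ (2 * H) + 3)))
        * (exp (2 / H) * ε ^ (2 * (2 / H))) := by gcongr
    _ = _ := by
        rw [four_rpow_one_sub, exp_add, exp_add, show 2 * (2 / H) = 4 / H by ring]
        ring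

theorem stmt12 (H₁ H₂ : ℝ) (hH₁ : H₁ ∈ Set.Ioo (0:ℝ) 1) (hH₂ : H₂ ∈ Set.Ioo (0:ℝ) 1)
    (I : ℝ → ℝ)
    (hI : ∀ ε : ℝ, 0 < ε → ∀ p ∈ Set.Ioo (0:ℝ) 1,
      I ε ≤ 8 * Real.exp (-(ε ^ 2 * (1 - p))
          / (2 * (1 + 4 * p / ((2:ℝ) ^ (2 * min H₁ H₂) * (1 - p)))))
        * (Real.exp 1 / p) ^ (2 / min H₁ H₂)) :
    ∀ ε : ℝ, 2 < ε →
      I ε ≤ 8 * Real.exp (2 / min H₁ H₂ + 1 / 2) * ε ^ (4 / min H₁ H₂)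
        * Real.exp (-(3 * ε ^ 2) / (2 * ((4:ℝ) ^ (1 - min H₁ H₂) + 3))) :=
  stmt12_general H₁ H₂ I hI
end
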